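/- If |α| < 1 and ε > 0, then the characteristic equation m² + εm + 1 = αεm e^{−mT} has no purely imaginary roots m = iω with ω real nonzero, for any delay T ≥ 0. -/
import Mathlib

theorem no_imaginary_roots_small_alpha (ε α T : ℝ) (hα : |α| < 1) (hε : ε > 0) (hT : T ≥ 0) :
    ∀ ω : ℝ, ω ≠ 0 →
      ¬ ((Complex.I * ω)^2 + (ε : ℂ) * (Complex.I * ω) + 1 =
        (α : ℂ) * ε * (Complex.I * ω) * Complex.exp (-(Complex.I * ω) * T)) := by
  intro ω hω h
  rw [Complex.ext_iff] at h
  obtain ⟨h1, h2⟩ := h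
  simp [Complex.exp_re, Complex.exp_im, pow_two] at h1 h2
  have hs := Real.sin_sq_add_cos_sq (ω * T)
  have hα2 : α^2 < 1 := by nlinarith [abs_nonneg α, sq_abs α, abs_lt.mp hα]
  have hpos : ε^2 * ω^2 > 0 := by positivity
  have e1 : (-(ω*ω) + 1)^2 = (α * ε * ω * Real.sin (ω * T))^2 := by rw [h1]
  have e2 : (ε * ω)^2 = (α * ε * ω * Real.cos (ω * T))^2 := by rw [h2]
  have key : (1 - α^2) * (ε^2 * ω^2) > 0 := mul_pos (by linarith) hpos
  nlinarith [sq_nonneg (1 - ω*ω), hs, e1, e2, key, mul_le_mul_of_nonneg_left hs.le (sq_nonneg (α*ε*ω))]
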